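/- arXiv:1409.4028 — 2 statements merged into one kernel-verified Lean document; each statement's English description precedes it below -/
import Mathlib

section
/- Let c : ℝ≥0 × U → ℝ≥0 be continuous and bounded by C̃, let Λ^n, Λ : ℝ≥0 → [0, M] be measurable with ∫₀^t Λ^n(s) ds → ∫₀^t Λ(s) ds for each t ≥ 0, let α > 0, and let r^n → r in the weak* sense of relaxed controls. Then ∫₀^∞ e^{−αy} exp(−∫₀^y Λ^n(s)ds) ∫_U c(y,u) r^n_y(du) dy → ∫₀^∞ e^{−αy} exp(−∫₀^y Λ(s)ds) ∫_U c(y,u) r_y(du) dy, provided each Λ^n(y) = ∫_U λ(y,u) r^n_y(du) for a fixed jointly continuous λ : ℝ≥0 × U → [0,M]. -/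
/-!
Write `w_n(y) = e^{-αy} e^{-∫₀^y Λ_n}`, `w(y) = e^{-αy} e^{-∫₀^y Λ}` and
`S_n(y) = ∫_U c(y,u) r^n_y(du) ∈ [0, C]`. Then
`|∫ w_n S_n - ∫ w S_n| ≤ C ∫ |w_n - w| → 0` by dominated convergence, since the cumulative
hazards converge pointwise and `0 < w_n, w ≤ e^{-αy}`; and `∫ w S_n → ∫ w S` is weak*
convergence tested against the continuous integrand `w(y) c(y,u)`, which is dominated by
`C e^{-αy}`.
-/

open MeasureTheory Set Filter Topology

/-- `e^{-αy} e^{-∫₀^y L}`: the discount factor times the survival probability under the hazard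
rate `L`. -/
noncomputable def discountedSurvival (α : ℝ) (L : ℝ → ℝ) (y : ℝ) : ℝ :=
  Real.exp (-α * y) * Real.exp (-∫ s in Ioc (0 : ℝ) y, L s)

theorem intervalIntegrable_of_norm_le {L : ℝ → ℝ} {M : ℝ} (hL : AEStronglyMeasurable L)
    (hLM : ∀ s, ‖L s‖ ≤ M) (a b : ℝ) : IntervalIntegrable L volume a b :=
  (intervalIntegrable_const (c := M)).mono_fun' hL.restrict (ae_of_all _ hLM)

theorem continuous_setIntegral_Ioc_zero {L : ℝ → ℝ}
    (hL : ∀ a b, IntervalIntegrable L volume a b) :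
    Continuous fun y => ∫ s in Ioc (0 : ℝ) y, L s := by
  have hprimitive :
      (fun y => ∫ s in Ioc (0 : ℝ) y, L s) = fun y => ∫ s in (0 : ℝ)..max y 0, L s := by
    funext y
    rcases le_or_gt y 0 with hy | hy
    · rw [max_eq_right hy, intervalIntegral.integral_same, Ioc_eq_empty (not_lt.2 hy),
        Measure.restrict_empty, integral_zero_measure]
    · rw [max_eq_left hy.le, intervalIntegral.integral_of_le hy.le]
  rw [hprimitive]
  exact (intervalIntegral.continuous_primitive hL 0).comp (continuous_id.max continuous_const)

theorem discountedSurvival_pos (α : ℝ) (L : ℝ → ℝ) (y : ℝ) : 0 < discountedSurvival α L y :=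
  mul_pos (Real.exp_pos _) (Real.exp_pos _)

theorem continuous_discountedSurvival (α : ℝ) {L : ℝ → ℝ}
    (hL : ∀ a b, IntervalIntegrable L volume a b) : Continuous (discountedSurvival α L) :=
  (Real.continuous_exp.comp (continuous_const.mul continuous_id)).mul
    (Real.continuous_exp.comp (continuous_setIntegral_Ioc_zero hL).neg)

section discountedSurvival

variable {α : ℝ} {L : ℝ → ℝ}

theorem discountedSurvival_le (hL : ∀ s, 0 ≤ L s) (y : ℝ) :
    discountedSurvival α L y ≤ Real.exp (-α * y) := by
  have hcum : 0 ≤ ∫ s in Ioc (0 : ℝ) y, L s :=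
    setIntegral_nonneg measurableSet_Ioc fun s _ => hL s
  exact mul_le_of_le_one_right (Real.exp_pos _).le (Real.exp_le_one_iff.2 (neg_nonpos.2 hcum))

theorem integrableOn_discountedSurvival (hα : 0 < α)
    (hL : ∀ a b, IntervalIntegrable L volume a b) (hL₀ : ∀ s, 0 ≤ L s) :
    IntegrableOn (discountedSurvival α L) (Ioi 0) :=
  (exp_neg_integrableOn_Ioi 0 hα).mono'
    (continuous_discountedSurvival α hL).aestronglyMeasurable (ae_of_all _ fun y => by
      rw [Real.norm_of_nonneg (discountedSurvival_pos α L y).le]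
      exact discountedSurvival_le hL₀ y)

theorem tendsto_integral_abs_discountedSurvival_sub (hα : 0 < α) {Lₙ : ℕ → ℝ → ℝ}
    (hLₙ : ∀ n a b, IntervalIntegrable (Lₙ n) volume a b) (hLₙ₀ : ∀ n s, 0 ≤ Lₙ n s)
    (hL : ∀ a b, IntervalIntegrable L volume a b) (hL₀ : ∀ s, 0 ≤ L s)
    (hcum : ∀ t, 0 ≤ t → Tendsto (fun n => ∫ s in Ioc (0 : ℝ) t, Lₙ n s) atTop
      (𝓝 (∫ s in Ioc (0 : ℝ) t, L s))) :
    Tendsto (fun n => ∫ y in Ioi (0 : ℝ),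
      |discountedSurvival α (Lₙ n) y - discountedSurvival α L y|) atTop (𝓝 0) := by
  have hbound : ∀ n y,
      ‖|discountedSurvival α (Lₙ n) y - discountedSurvival α L y|‖ ≤ Real.exp (-α * y) := by
    intro n y
    rw [norm_abs_eq_norm, Real.norm_eq_abs, abs_sub_le_iff]
    have := discountedSurvival_pos α (Lₙ n) y
    have := discountedSurvival_pos α L y
    have := discountedSurvival_le (α := α) (hLₙ₀ n) y
    have := discountedSurvival_le (α := α) hL₀ y
    constructor <;> linarith
  have hlim : ∀ᵐ y ∂volume.restrict (Ioi (0 : ℝ)), Tendsto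
      (fun n => |discountedSurvival α (Lₙ n) y - discountedSurvival α L y|) atTop (𝓝 0) := by
    filter_upwards [ae_restrict_mem measurableSet_Ioi] with y hy
    have hconv : Tendsto (fun n => discountedSurvival α (Lₙ n) y) atTop
        (𝓝 (discountedSurvival α L y)) :=
      ((hcum y (le_of_lt hy)).neg.rexp).const_mul _
    simpa using (hconv.sub_const (discountedSurvival α L y)).abs
  simpa using tendsto_integral_of_dominated_convergence _
    (fun n => ((continuous_discountedSurvival α (hLₙ n)).sub
      (continuous_discountedSurvival α hL)).abs.aestronglyMeasurable)
    (exp_neg_integrableOn_Ioi 0 hα) (fun n => ae_of_all _ (hbound n)) hlim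

end discountedSurvival

section weightedIntegrals

variable {X : Type*} [MeasurableSpace X] {μ : Measure X}

theorem aestronglyMeasurable_of_mul_left {a S : X → ℝ} (ha : AEStronglyMeasurable a μ)
    (ha₀ : ∀ x, a x ≠ 0) (haS : AEStronglyMeasurable (fun x => a x * S x) μ) :
    AEStronglyMeasurable S μ :=
  (haS.mul ha.fun_inv₀).congr (ae_of_all _ fun x => by
    simp only [Pi.mul_apply]
    field_simp [ha₀ x])

/-- No measurability of `S` is assumed: if `S` is not a.e. strongly measurable, then neither
product is integrable and both integrals vanish. -/
theorem abs_integral_mul_sub_integral_mul_le {a b S : X → ℝ} {C : ℝ} (ha : Integrable a μ)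
    (hb : Integrable b μ) (ha₀ : ∀ x, a x ≠ 0) (hb₀ : ∀ x, b x ≠ 0) (hS : ∀ x, |S x| ≤ C) :
    |∫ x, a x * S x ∂μ - ∫ x, b x * S x ∂μ| ≤ C * ∫ x, |a x - b x| ∂μ := by
  by_cases hSm : AEStronglyMeasurable S μ
  · have haS := ha.mul_bdd hSm (ae_of_all _ hS)
    have hbS := hb.mul_bdd hSm (ae_of_all _ hS)
    rw [← integral_sub haS hbS, ← integral_const_mul]
    refine (abs_integral_le_integral_abs).trans
      (integral_mono (haS.sub hbS).abs ((ha.sub hb).abs.const_mul C) fun x => ?_)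
    simp only [← sub_mul, abs_mul]
    rw [mul_comm]
    exact mul_le_mul_of_nonneg_right (hS x) (abs_nonneg _)
  · obtain ⟨x⟩ : Nonempty X := not_isEmpty_iff.1 fun _ => hSm .of_subsingleton_dom
    have hnotint : ∀ e : X → ℝ, Integrable e μ → (∀ x, e x ≠ 0) →
        ¬ Integrable (fun x => e x * S x) μ := fun e he he₀ heS =>
      hSm (aestronglyMeasurable_of_mul_left he.aestronglyMeasurable he₀ heS.aestronglyMeasurable)
    rw [integral_undef (hnotint a ha ha₀), integral_undef (hnotint b hb hb₀), sub_zero,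
      abs_zero]
    exact mul_nonneg ((abs_nonneg _).trans (hS x)) (integral_nonneg fun _ => abs_nonneg _)

theorem tendsto_integral_mul_of_tendsto_integral_abs_sub {a : ℕ → X → ℝ} {b : X → ℝ}
    {S : ℕ → X → ℝ} {C l : ℝ} (ha : ∀ n, Integrable (a n) μ) (hb : Integrable b μ)
    (ha₀ : ∀ n x, a n x ≠ 0) (hb₀ : ∀ x, b x ≠ 0) (hS : ∀ n x, |S n x| ≤ C)
    (hab : Tendsto (fun n => ∫ x, |a n x - b x| ∂μ) atTop (𝓝 0))
    (hbS : Tendsto (fun n => ∫ x, b x * S n x ∂μ) atTop (𝓝 l)) :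
    Tendsto (fun n => ∫ x, a n x * S n x ∂μ) atTop (𝓝 l) := by
  have hdiff : Tendsto (fun n => ∫ x, a n x * S n x ∂μ - ∫ x, b x * S n x ∂μ) atTop (𝓝 0) :=
    squeeze_zero_norm
      (fun n => abs_integral_mul_sub_integral_mul_le (ha n) hb (ha₀ n) hb₀ (hS n))
      (by simpa using hab.const_mul C)
  simpa using hdiff.add hbS

end weightedIntegrals

theorem integrable_iSup_abs_of_abs_le {X U : Type*} [TopologicalSpace X] [MeasurableSpace X]
    [OpensMeasurableSpace X] [TopologicalSpace U] [CompactSpace U] {μ : Measure X}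
    {f : X → U → ℝ} (hf : Continuous (Function.uncurry f)) {g : X → ℝ} (hg : Integrable g μ)
    (hfg : ∀ x u, |f x u| ≤ g x) : Integrable (fun x => ⨆ u, |f x u|) μ := by
  have hcont : Continuous fun x => ⨆ u, |f x u| := by
    simpa only [image_univ, sSup_range] using
      isCompact_univ.continuous_sSup (f := fun x u => |f x u|) (continuous_abs.comp hf)
  refine hg.abs.mono' hcont.aestronglyMeasurable (ae_of_all _ fun x => ?_)
  rw [Real.norm_of_nonneg (Real.iSup_nonneg fun u => abs_nonneg _)]
  exact Real.iSup_le (fun u => (hfg x u).trans (le_abs_self _)) (abs_nonneg _)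

theorem one_stage_discounted_cost_converges_general
    {U : Type*} [MetricSpace U] [CompactSpace U] [MeasurableSpace U]
    [BorelSpace U]
    (c : ℝ → U → ℝ) (hccont : Continuous (Function.uncurry c))
    (C : ℝ) (hcnonneg : ∀ y u, 0 ≤ c y u) (hcbdd : ∀ y u, c y u ≤ C)
    (M : ℝ)
    (r : ℕ → ℝ → Measure U) (rlim : ℝ → Measure U)
    (hrprob : ∀ n y, IsProbabilityMeasure (r n y))
    (Lam : ℕ → ℝ → ℝ) (LamLim : ℝ → ℝ)
    (hLammeas : ∀ n, Measurable (Lam n)) (hLamLimmeas : Measurable LamLim)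
    (hLammem : ∀ n y, Lam n y ∈ Icc (0 : ℝ) M)
    (hLamLimmem : ∀ y, LamLim y ∈ Icc (0 : ℝ) M)
    (hcum : ∀ t : ℝ, 0 ≤ t →
      Tendsto (fun n => ∫ s in Ioc (0 : ℝ) t, Lam n s) atTop
        (𝓝 (∫ s in Ioc (0 : ℝ) t, LamLim s)))
    (α : ℝ) (hα : 0 < α)
    (hconv : ∀ f : ℝ → U → ℝ,
      Measurable (Function.uncurry f) → (∀ y, Continuous (f y)) →
      Integrable (fun y => ⨆ u, |f y u|) (volume.restrict (Ioi (0 : ℝ))) →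
      Tendsto (fun n => ∫ y in Ioi (0 : ℝ), ∫ u, f y u ∂(r n y)) atTop
        (𝓝 (∫ y in Ioi (0 : ℝ), ∫ u, f y u ∂(rlim y)))) :
    Tendsto (fun n => ∫ y in Ioi (0 : ℝ),
        Real.exp (-α * y) * Real.exp (-∫ s in Ioc (0 : ℝ) y, Lam n s) *
          ∫ u, c y u ∂(r n y)) atTop
      (𝓝 (∫ y in Ioi (0 : ℝ),
        Real.exp (-α * y) * Real.exp (-∫ s in Ioc (0 : ℝ) y, LamLim s) *
          ∫ u, c y u ∂(rlim y))) := by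
  have hLamInt : ∀ n a b, IntervalIntegrable (Lam n) volume a b := fun n =>
    intervalIntegrable_of_norm_le (hLammeas n).aestronglyMeasurable
      fun s => (Real.norm_of_nonneg (hLammem n s).1).trans_le (hLammem n s).2
  have hLamLimInt : ∀ a b, IntervalIntegrable LamLim volume a b :=
    intervalIntegrable_of_norm_le hLamLimmeas.aestronglyMeasurable
      fun s => (Real.norm_of_nonneg (hLamLimmem s).1).trans_le (hLamLimmem s).2
  set w := discountedSurvival α LamLim
  have hw : IntegrableOn w (Ioi 0) :=
    integrableOn_discountedSurvival hα hLamLimInt fun s => (hLamLimmem s).1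
  have hcost : ∀ n y, |∫ u, c y u ∂(r n y)| ≤ C := fun n y => by
    have := hrprob n y
    rw [← Real.norm_eq_abs]
    refine (norm_integral_le_of_norm_le_const (C := C) (ae_of_all _ fun u => ?_)).trans_eq
      (by simp)
    exact (Real.norm_of_nonneg (hcnonneg y u)).trans_le (hcbdd y u)
  have hwc : Continuous (Function.uncurry fun y u => w y * c y u) :=
    (continuous_discountedSurvival α hLamLimInt).fst'.mul hccont
  have hweak := hconv _ hwc.measurable (fun y => hwc.comp (Continuous.prodMk_right y))
    (integrable_iSup_abs_of_abs_le hwc (hw.mul_const C) fun y u => by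
      have hwy := (discountedSurvival_pos α LamLim y).le
      rw [abs_of_nonneg (mul_nonneg hwy (hcnonneg y u))]
      exact mul_le_mul_of_nonneg_left (hcbdd y u) hwy)
  simp only [integral_const_mul] at hweak
  exact tendsto_integral_mul_of_tendsto_integral_abs_sub
    (fun n => integrableOn_discountedSurvival hα (hLamInt n) fun s => (hLammem n s).1) hw
    (fun n y => (discountedSurvival_pos α (Lam n) y).ne')
    (fun y => (discountedSurvival_pos α LamLim y).ne') hcost
    (tendsto_integral_abs_discountedSurvival_sub hα hLamInt (fun n s => (hLammem n s).1)
      hLamLimInt (fun s => (hLamLimmem s).1) hcum)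
    hweak

/-- Continuity of the expected one-stage discounted cost along a weak*-convergent
sequence of relaxed controls: if the cumulative hazards converge pointwise and the
relaxed controls converge in the weak* sense, then the one-stage discounted costs
converge. -/
theorem one_stage_discounted_cost_converges
    {U : Type*} [MetricSpace U] [CompactSpace U] [Nonempty U] [MeasurableSpace U]
    [BorelSpace U]
    (c : ℝ → U → ℝ) (hccont : Continuous (Function.uncurry c))
    (C : ℝ) (hC : 0 < C) (hcnonneg : ∀ y u, 0 ≤ c y u) (hcbdd : ∀ y u, c y u ≤ C)
    (M : ℝ) (hM : 0 < M)
    (lam : ℝ → U → ℝ) (hlamcont : Continuous (Function.uncurry lam))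
    (hlammem : ∀ y u, lam y u ∈ Icc (0 : ℝ) M)
    (r : ℕ → ℝ → Measure U) (rlim : ℝ → Measure U)
    (hrprob : ∀ n y, IsProbabilityMeasure (r n y))
    (hrlimprob : ∀ y, IsProbabilityMeasure (rlim y))
    (Lam : ℕ → ℝ → ℝ) (LamLim : ℝ → ℝ)
    (hLam : ∀ n y, Lam n y = ∫ u, lam y u ∂(r n y))
    (hLamLim : ∀ y, LamLim y = ∫ u, lam y u ∂(rlim y))
    (hLammeas : ∀ n, Measurable (Lam n)) (hLamLimmeas : Measurable LamLim)
    (hLammem : ∀ n y, Lam n y ∈ Icc (0 : ℝ) M)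
    (hLamLimmem : ∀ y, LamLim y ∈ Icc (0 : ℝ) M)
    (hcum : ∀ t : ℝ, 0 ≤ t →
      Tendsto (fun n => ∫ s in Ioc (0 : ℝ) t, Lam n s) atTop
        (𝓝 (∫ s in Ioc (0 : ℝ) t, LamLim s)))
    (α : ℝ) (hα : 0 < α)
    (hconv : ∀ f : ℝ → U → ℝ,
      Measurable (Function.uncurry f) → (∀ y, Continuous (f y)) →
      Integrable (fun y => ⨆ u, |f y u|) (volume.restrict (Ioi (0 : ℝ))) →
      Tendsto (fun n => ∫ y in Ioi (0 : ℝ), ∫ u, f y u ∂(r n y)) atTop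
        (𝓝 (∫ y in Ioi (0 : ℝ), ∫ u, f y u ∂(rlim y)))) :
    Tendsto (fun n => ∫ y in Ioi (0 : ℝ),
        Real.exp (-α * y) * Real.exp (-∫ s in Ioc (0 : ℝ) y, Lam n s) *
          ∫ u, c y u ∂(r n y)) atTop
      (𝓝 (∫ y in Ioi (0 : ℝ),
        Real.exp (-α * y) * Real.exp (-∫ s in Ioc (0 : ℝ) y, LamLim s) *
          ∫ u, c y u ∂(rlim y))) :=
  one_stage_discounted_cost_converges_general c hccont C hcnonneg hcbdd M r rlim hrprob Lam LamLim
    hLammeas hLamLimmeas hLammem hLamLimmem hcum α hα hconv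
end

section
/- Fix α > 0, a jointly continuous bounded rate λ : ℝ≥0 × U → [0,M] with inf λ ≥ m > 0, and a continuous bounded cost c. For r in the relaxed control space R define f(r) = ∫₀^∞ e^{−αy} exp(−∫₀^y ∫_U λ(s,u) r_s(du) ds) ∫_U c(y,u) r_y(du) dy. Then f attains its infimum over R, i.e., there exists r* ∈ R with f(r*) = inf_{r∈R} f(r). -/
/-!
Write the cost as `F r = ∫ G r y * K r y` over `y > 0`, where
`G r y = e^{-α y} exp (-∫₀^y ⟨ρ r s, lam s⟩ ds)` and `K r y = ⟨ρ r y, c y⟩`.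
Both `r ↦ ∫₀^y ⟨ρ r s, lam s⟩ ds` and `r ↦ ∫ G p y * K r y` are weak* pairings of `ρ r`
with integrands in `L¹([0,∞); C(U))`, hence continuous. Near `p` the remaining term
`∫ (G r - G p) * K r` tends to `0` by dominated convergence, since `|G r y| ≤ e^{-α y}` and
`0 ≤ K r ≤ C`. So `F` is continuous on the compact space `R` and attains its minimum.
-/

open MeasureTheory Set Filter Topology

theorem measurable_integral_Ioc_of_nonneg {h : ℝ → ℝ} (hh : ∀ s, 0 ≤ h s) (a : ℝ) :
    Measurable fun y => ∫ s in Ioc a y, h s := by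
  set A : Set ℝ := {y | IntegrableOn h (Ioc a y)}
  have hA : A.OrdConnected :=
    ⟨fun _ _ _ hz _ hx => hz.mono_set (Ioc_subset_Ioc_right hx.2)⟩
  have hmono : MonotoneOn (fun y => ∫ s in Ioc a y, h s) A := fun _ _ _ hz hyz =>
    setIntegral_mono_set hz (.of_forall hh) (Ioc_subset_Ioc_right hyz).eventuallyLE
  -- Off `A` the integral takes the junk value `0`.
  have hjunk :
      (fun y => ∫ s in Ioc a y, h s) = A.indicator fun y => ∫ s in Ioc a y, h s := by
    funext y
    by_cases hy : y ∈ A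
    · rw [indicator_of_mem hy]
    · rw [indicator_of_notMem hy, integral_undef hy]
  rw [hjunk]
  refine measurable_of_restrict_of_restrict_compl hA.measurableSet ?_ ?_
  · convert (show Monotone fun y : A => ∫ s in Ioc a y, h s from
      fun y z hyz => hmono y.2 z.2 hyz).measurable using 1
    exact funext fun y => indicator_of_mem y.2 _
  · convert measurable_const (a := (0 : ℝ)) using 1
    exact funext fun y => indicator_of_notMem y.2 _

theorem measurable_exp_mul_exp_neg_integral_Ioc {h : ℝ → ℝ} (hh : ∀ s, 0 ≤ h s) (α a : ℝ) :
    Measurable fun y => Real.exp (-α * y) * Real.exp (-∫ s in Ioc a y, h s) :=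
  (measurable_const.mul measurable_id).exp.mul (measurable_integral_Ioc_of_nonneg hh a).neg.exp

theorem abs_exp_mul_exp_neg_integral_Ioc_le {h : ℝ → ℝ} (hh : ∀ s, 0 ≤ h s) (α a y : ℝ) :
    |Real.exp (-α * y) * Real.exp (-∫ s in Ioc a y, h s)| ≤ Real.exp (-α * y) := by
  rw [abs_of_pos (by positivity)]
  exact mul_le_of_le_one_right (Real.exp_pos _).le
    (Real.exp_le_one_iff.2 (neg_nonpos.2 (setIntegral_nonneg measurableSet_Ioc fun s _ => hh s)))

theorem measurable_iSup_abs {α U : Type*} [TopologicalSpace α] [MeasurableSpace α]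
    [OpensMeasurableSpace α] {g : α → U → ℝ} (hg : ∀ u, Continuous fun y => g y u) {B : ℝ}
    (hB : ∀ y u, |g y u| ≤ B) : Measurable fun y => ⨆ u, |g y u| :=
  (lowerSemicontinuous_ciSup (fun y => ⟨B, forall_mem_range.2 (hB y)⟩)
    fun u => ((hg u).abs).lowerSemicontinuous).measurable

theorem MeasureTheory.AEStronglyMeasurable.of_mul_left {α : Type*} [MeasurableSpace α]
    {μ : Measure α} {G K : α → ℝ} (hGK : AEStronglyMeasurable (fun x => G x * K x) μ)
    (hG : Measurable G) (hG0 : ∀ x, G x ≠ 0) : AEStronglyMeasurable K μ := by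
  have hK : K = fun x => (G x * K x) / G x :=
    funext fun x => (mul_div_cancel_left₀ _ (hG0 x)).symm
  rw [hK]
  exact (hGK.aemeasurable.div hG.aemeasurable).aestronglyMeasurable

theorem continuous_integral_mul_of_continuous_pairing {R α : Type*} [TopologicalSpace R]
    [FirstCountableTopology R] [MeasurableSpace α] {μ : Measure α} {G K : R → α → ℝ}
    {g : α → ℝ} {C : ℝ} (hG : ∀ x, Continuous fun r => G r x)
    (hGmeas : ∀ r, AEStronglyMeasurable (G r) μ) (hGg : ∀ r x, |G r x| ≤ g x)
    (hg : Integrable g μ) (hKmeas : ∀ r, AEStronglyMeasurable (K r) μ)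
    (hKC : ∀ r x, |K r x| ≤ C) (hpair : ∀ p, Continuous fun r => ∫ x, G p x * K r x ∂μ) :
    Continuous fun r => ∫ x, G r x * K r x ∂μ := by
  have hint : ∀ p r, Integrable (fun x => G p x * K r x) μ := fun p r =>
    (hg.mono' (hGmeas p) (.of_forall (hGg p))).mul_bdd (hKmeas r) (.of_forall (hKC r))
  refine continuous_iff_continuousAt.2 fun p => ?_
  have hdiff : Tendsto (fun r => ∫ x, (G r x - G p x) * K r x ∂μ) (𝓝 p) (𝓝 0) := by
    have hlim : ∀ x, Tendsto (fun r => (G r x - G p x) * K r x) (𝓝 p) (𝓝 0) := fun x =>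
      squeeze_zero_norm (a := fun r => |G r x - G p x| * C)
        (fun r => by
          rw [Real.norm_eq_abs, abs_mul]
          exact mul_le_mul_of_nonneg_left (hKC r x) (abs_nonneg _))
        (by simpa using (((hG x).tendsto p).sub_const (G p x)).abs.mul_const C)
    have hbound : ∀ r x, ‖(G r x - G p x) * K r x‖ ≤ 2 * g x * C := fun r x => by
      have hGp := (abs_nonneg _).trans (hGg p x)
      rw [Real.norm_eq_abs, abs_mul]
      exact mul_le_mul (by linarith [abs_sub (G r x) (G p x), hGg r x, hGg p x]) (hKC r x)
        (abs_nonneg _) (by linarith)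
    simpa using tendsto_integral_filter_of_dominated_convergence (fun x => 2 * g x * C)
      (F := fun r x => (G r x - G p x) * K r x)
      (.of_forall fun r => ((hGmeas r).sub (hGmeas p)).mul (hKmeas r))
      (.of_forall fun r => .of_forall (hbound r)) ((hg.const_mul 2).mul_const C)
      (.of_forall hlim)
  have hsplit : ∀ r, ∫ x, G r x * K r x ∂μ
      = ∫ x, (G r x - G p x) * K r x ∂μ + ∫ x, G p x * K r x ∂μ := fun r => by
    have hint_sub : Integrable (fun x => (G r x - G p x) * K r x) μ :=
      ((hint r r).sub (hint p r)).congr (.of_forall fun x => by simp [sub_mul])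
    rw [← integral_add hint_sub (hint p r)]
    simp only [sub_mul, sub_add_cancel]
  rw [ContinuousAt, funext hsplit]
  simpa using hdiff.add ((hpair p).tendsto p)

/-- `ρ`, read as a map into `L^∞([0,∞); M(U))`, is continuous for the weak* topology of the
dual of `L¹([0,∞); C(U))`, tested on measurable integrands `f` with `∫ sup_u |f y u| dy < ∞`. -/
def WeakStarContinuous {R U : Type*} [TopologicalSpace R] [TopologicalSpace U]
    [MeasurableSpace U] (ρ : R → ℝ → Measure U) : Prop :=
  ∀ f : ℝ → U → ℝ, Measurable (Function.uncurry f) → (∀ y, Continuous (f y)) →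
    Integrable (fun y => ⨆ u, |f y u|) (volume.restrict (Ioi (0 : ℝ))) →
    Continuous fun r : R => ∫ y in Ioi (0 : ℝ), ∫ u, f y u ∂(ρ r y)

namespace WeakStarContinuous

variable {R U : Type*} [TopologicalSpace R] [TopologicalSpace U] [MeasurableSpace U]
  [OpensMeasurableSpace U] {ρ : R → ℝ → Measure U} {g : ℝ → U → ℝ} {B : ℝ}

theorem continuous_setIntegral_mul_integral (hρ : WeakStarContinuous ρ) {a : ℝ → ℝ}
    (ha : Measurable a) (hai : IntegrableOn a (Ioi 0)) (hg : Continuous (Function.uncurry g))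
    (hB : ∀ y u, |g y u| ≤ B) :
    Continuous fun r => ∫ y in Ioi (0 : ℝ), a y * ∫ u, g y u ∂(ρ r y) := by
  have hsup : (fun y => ⨆ u, |a y * g y u|) = fun y => |a y| * ⨆ u, |g y u| :=
    funext fun y => by simp only [abs_mul, Real.mul_iSup_of_nonneg (abs_nonneg (a y))]
  have hsup_le : ∀ y, ⨆ u, |g y u| ≤ max B 0 := fun y =>
    Real.iSup_le (fun u => (hB y u).trans (le_max_left _ _)) (le_max_right _ _)
  have hint : Integrable (fun y => ⨆ u, |a y * g y u|) (volume.restrict (Ioi 0)) := by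
    rw [hsup]
    refine (hai.abs.mul_const (max B 0)).mono'
      (ha.abs.mul (measurable_iSup_abs (fun u => hg.comp (.prodMk_left u)) hB)).aestronglyMeasurable
      (.of_forall fun y => ?_)
    rw [norm_mul, Real.norm_eq_abs, abs_abs,
      Real.norm_of_nonneg (Real.iSup_nonneg fun u => abs_nonneg _)]
    exact mul_le_mul_of_nonneg_left (hsup_le y) (abs_nonneg _)
  simpa only [integral_const_mul] using hρ (fun y u => a y * g y u)
    ((ha.comp measurable_fst).mul hg.measurable)
    (fun y => continuous_const.mul (hg.comp (.prodMk_right y))) hint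

theorem continuous_integral_Ioc_integral (hρ : WeakStarContinuous ρ)
    (hg : Continuous (Function.uncurry g)) (hB : ∀ y u, |g y u| ≤ B) (t : ℝ) :
    Continuous fun r => ∫ s in Ioc (0 : ℝ) t, ∫ u, g s u ∂(ρ r s) := by
  have hind : Integrable ((Ioc (0 : ℝ) t).indicator fun _ => (1 : ℝ)) :=
    (integrable_indicator_iff measurableSet_Ioc).2 (integrableOn_const measure_Ioc_lt_top.ne)
  convert hρ.continuous_setIntegral_mul_integral (measurable_const.indicator measurableSet_Ioc)
    hind.integrableOn hg hB using 2 with r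
  have hmul : ∀ y, (Ioc (0 : ℝ) t).indicator (fun _ => (1 : ℝ)) y * ∫ u, g y u ∂(ρ r y)
      = (Ioc 0 t).indicator (fun s => ∫ u, g s u ∂(ρ r s)) y := fun y => by
    by_cases hy : y ∈ Ioc (0 : ℝ) t <;> simp [hy]
  rw [funext hmul, setIntegral_indicator measurableSet_Ioc,
    inter_eq_self_of_subset_right Ioc_subset_Ioi_self]

end WeakStarContinuous

theorem one_stage_cost_attains_min_general
    {U : Type*} [MetricSpace U] [MeasurableSpace U]
    [BorelSpace U]
    {R : Type*} [MetricSpace R] [CompactSpace R] [Nonempty R]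
    (ρ : R → ℝ → Measure U) (hρprob : ∀ r y, IsProbabilityMeasure (ρ r y))
    (hweakstar : ∀ f : ℝ → U → ℝ,
      Measurable (Function.uncurry f) → (∀ y, Continuous (f y)) →
      Integrable (fun y => ⨆ u, |f y u|) (volume.restrict (Ioi (0 : ℝ))) →
      Continuous (fun r : R => ∫ y in Ioi (0 : ℝ), ∫ u, f y u ∂(ρ r y)))
    (α : ℝ) (hα : 0 < α)
    (M m : ℝ) (hm : 0 < m)
    (lam : ℝ → U → ℝ) (hlamcont : Continuous (Function.uncurry lam))
    (hlammem : ∀ y u, lam y u ∈ Icc m M)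
    (c : ℝ → U → ℝ) (hccont : Continuous (Function.uncurry c))
    (C : ℝ) (hcmem : ∀ y u, c y u ∈ Icc (0 : ℝ) C)
    (F : R → ℝ)
    (hF : ∀ r : R, F r = ∫ y in Ioi (0 : ℝ),
        Real.exp (-α * y) *
          Real.exp (-∫ s in Ioc (0 : ℝ) y, ∫ u, lam s u ∂(ρ r s)) *
          ∫ u, c y u ∂(ρ r y)) :
    ∃ rstar : R, ∀ r : R, F rstar ≤ F r := by
  have hρ : WeakStarContinuous ρ := hweakstar
  set G : R → ℝ → ℝ := fun r y =>
    Real.exp (-α * y) * Real.exp (-∫ s in Ioc (0 : ℝ) y, ∫ u, lam s u ∂(ρ r s))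
  set K : R → ℝ → ℝ := fun r y => ∫ u, c y u ∂(ρ r y)
  have hlam_abs : ∀ y u, |lam y u| ≤ M := fun y u =>
    (abs_of_pos (hm.trans_le (hlammem y u).1)).trans_le (hlammem y u).2
  have hc_abs : ∀ y u, |c y u| ≤ C := fun y u =>
    (abs_of_nonneg (hcmem y u).1).trans_le (hcmem y u).2
  have hlam_nonneg : ∀ r s, 0 ≤ ∫ u, lam s u ∂(ρ r s) := fun r s =>
    integral_nonneg fun u => hm.le.trans (hlammem s u).1
  have hG_meas : ∀ r, Measurable (G r) := fun r =>
    measurable_exp_mul_exp_neg_integral_Ioc (hlam_nonneg r) α 0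
  have hG_le : ∀ r y, |G r y| ≤ Real.exp (-α * y) := fun r y =>
    abs_exp_mul_exp_neg_integral_Ioc_le (hlam_nonneg r) α 0 y
  have hexp_int : IntegrableOn (fun y => Real.exp (-α * y)) (Ioi 0) :=
    exp_neg_integrableOn_Ioi 0 hα
  have hK_nonneg : ∀ r y, 0 ≤ K r y := fun r y => integral_nonneg fun u => (hcmem y u).1
  have hK_le : ∀ r y, |K r y| ≤ C := fun r y => by
    have := hρprob r y
    simpa using norm_integral_le_of_norm_le_const (μ := ρ r y) (f := c y)
      (.of_forall (hc_abs y))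
  -- `ρ` need not be measurable in `y`, so `K r` may fail to be measurable, and then `F r` is
  -- the junk value `0`; such a zero of `F ≥ 0` is a minimizer anyway.
  by_cases hzero : ∃ r₀, F r₀ = 0
  · obtain ⟨r₀, hr₀⟩ := hzero
    refine ⟨r₀, fun r => hr₀ ▸ (hF r).symm ▸ integral_nonneg fun y => ?_⟩
    exact mul_nonneg (by positivity) (hK_nonneg r y)
  have hK_meas : ∀ r, AEStronglyMeasurable (K r) (volume.restrict (Ioi 0)) := fun r => by
    have hGK : Integrable (fun y => G r y * K r y) (volume.restrict (Ioi 0)) :=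
      .of_integral_ne_zero ((hF r).symm.trans_ne fun h => hzero ⟨r, h⟩)
    exact hGK.aestronglyMeasurable.of_mul_left (hG_meas r) fun y => (by positivity : 0 < G r y).ne'
  have hG_cont : ∀ y, Continuous fun r => G r y := fun y =>
    continuous_const.mul (hρ.continuous_integral_Ioc_integral hlamcont hlam_abs y).neg.rexp
  have hpair : ∀ p, Continuous fun r => ∫ y in Ioi (0 : ℝ), G p y * K r y := fun p =>
    hρ.continuous_setIntegral_mul_integral (hG_meas p)
      (hexp_int.mono' (hG_meas p).aestronglyMeasurable (.of_forall (hG_le p))) hccont hc_abs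
  have hF_cont : Continuous F := by
    rw [funext hF]
    exact continuous_integral_mul_of_continuous_pairing hG_cont
      (fun r => (hG_meas r).aestronglyMeasurable) hG_le hexp_int hK_meas hK_le hpair
  obtain ⟨rstar, -, hmin⟩ := isCompact_univ.exists_isMinOn univ_nonempty hF_cont.continuousOn
  exact ⟨rstar, fun r => hmin (mem_univ r)⟩

/-- The expected one-stage discounted cost attains its infimum over the (compact
metric) relaxed control space `R`. Here `R` is a nonempty compact metric space whose
points are interpreted as relaxed controls via `ρ`, and the weak* pairing with every
`L¹([0,∞); C(U))` integrand is assumed continuous in the control (this is the weak*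
topology on `R`). -/
theorem one_stage_cost_attains_min
    {U : Type*} [MetricSpace U] [CompactSpace U] [Nonempty U] [MeasurableSpace U]
    [BorelSpace U]
    {R : Type*} [MetricSpace R] [CompactSpace R] [Nonempty R]
    (ρ : R → ℝ → Measure U) (hρprob : ∀ r y, IsProbabilityMeasure (ρ r y))
    (hweakstar : ∀ f : ℝ → U → ℝ,
      Measurable (Function.uncurry f) → (∀ y, Continuous (f y)) →
      Integrable (fun y => ⨆ u, |f y u|) (volume.restrict (Ioi (0 : ℝ))) →
      Continuous (fun r : R => ∫ y in Ioi (0 : ℝ), ∫ u, f y u ∂(ρ r y)))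
    (α : ℝ) (hα : 0 < α)
    (M m : ℝ) (hm : 0 < m) (hmM : m ≤ M)
    (lam : ℝ → U → ℝ) (hlamcont : Continuous (Function.uncurry lam))
    (hlammem : ∀ y u, lam y u ∈ Icc m M)
    (c : ℝ → U → ℝ) (hccont : Continuous (Function.uncurry c))
    (C : ℝ) (hcmem : ∀ y u, c y u ∈ Icc (0 : ℝ) C)
    (F : R → ℝ)
    (hF : ∀ r : R, F r = ∫ y in Ioi (0 : ℝ),
        Real.exp (-α * y) *
          Real.exp (-∫ s in Ioc (0 : ℝ) y, ∫ u, lam s u ∂(ρ r s)) *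
          ∫ u, c y u ∂(ρ r y)) :
    ∃ rstar : R, ∀ r : R, F rstar ≤ F r :=
  one_stage_cost_attains_min_general ρ hρprob hweakstar α hα M m hm lam hlamcont hlammem c hccont C
    hcmem F hF
end
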